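/- Let V be a multiplicative partial isometry on H⊗H. Define λ(ω) = (ω⊗id)(V) and ρ(ω) = (id⊗ω)(V) for linear functionals ω on L(H), and let A = λ(L(H)*) and Â = ρ(L(H)*) be the right and left legs of V. Then A is a subalgebra of L(H), i.e. λ(ω)λ(ω') = λ(ω⋆ω') where (ω⋆ω')(X) = (ω⊗ω')(V*(1⊗X)V); in particular A is closed under operator multiplication. -/
import Mathlib


open Matrix

namespace MPIpaper

variable {n : Type*} [Fintype n] [DecidableEq n]

noncomputable section

/-- `W₁₂ = W ⊗ 1` on `H ⊗ H ⊗ H`. -/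
def leg12 (V : Matrix (n × n) (n × n) ℂ) : Matrix (n × n × n) (n × n × n) ℂ :=
  Matrix.of fun p q => V (p.1, p.2.1) (q.1, q.2.1) * (if p.2.2 = q.2.2 then (1 : ℂ) else 0)

/-- `W₂₃ = 1 ⊗ W` on `H ⊗ H ⊗ H`. -/
def leg23 (V : Matrix (n × n) (n × n) ℂ) : Matrix (n × n × n) (n × n × n) ℂ :=
  Matrix.of fun p q => (if p.1 = q.1 then (1 : ℂ) else 0) * V p.2 q.2

/-- `W₁₃ = (1⊗Σ)(W⊗1)(1⊗Σ)` on `H ⊗ H ⊗ H`. -/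
def leg13 (V : Matrix (n × n) (n × n) ℂ) : Matrix (n × n × n) (n × n × n) ℂ :=
  Matrix.of fun p q => V (p.1, p.2.2) (q.1, q.2.2) * (if p.2.1 = q.2.1 then (1 : ℂ) else 0)

/-- A multiplicative partial isometry: `VV*V = V`, the pentagon equation, and the
three auxiliary (hexagon-type) equations. -/
def IsMPI (V : Matrix (n × n) (n × n) ℂ) : Prop :=
  V * Vᴴ * V = V ∧
  leg23 V * leg12 V = leg12 V * leg13 V * leg23 V ∧
  leg13 V * leg23 V * (leg23 V)ᴴ = (leg12 V)ᴴ * leg12 V * leg13 V ∧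
  leg12 V * (leg12 V)ᴴ * leg23 V = leg23 V * leg12 V * (leg12 V)ᴴ ∧
  leg12 V * (leg23 V)ᴴ * leg23 V = (leg23 V)ᴴ * leg23 V * leg12 V

/-- `λ(ω) = (ω ⊗ id)(V)`. -/
def lam (ω : Matrix n n ℂ →ₗ[ℂ] ℂ) (V : Matrix (n × n) (n × n) ℂ) : Matrix n n ℂ :=
  Matrix.of fun i j => ω (Matrix.of fun a b => V (a, i) (b, j))

/-- `ρ(ω) = (id ⊗ ω)(V)`. -/
def rho (ω : Matrix n n ℂ →ₗ[ℂ] ℂ) (V : Matrix (n × n) (n × n) ℂ) : Matrix n n ℂ :=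
  Matrix.of fun i j => ω (Matrix.of fun a b => V (i, a) (j, b))

/-- `1 ⊗ X` on `H ⊗ H`. -/
def oneTensor (X : Matrix n n ℂ) : Matrix (n × n) (n × n) ℂ :=
  Matrix.of fun p q => (if p.1 = q.1 then (1 : ℂ) else 0) * X p.2 q.2

/-- `X ⊗ 1` on `H ⊗ H`. -/
def tensorOne (X : Matrix n n ℂ) : Matrix (n × n) (n × n) ℂ :=
  Matrix.of fun p q => X p.1 q.1 * (if p.2 = q.2 then (1 : ℂ) else 0)

/-- `Δ(X) = V (X ⊗ 1) V*`. -/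
def Delta (V : Matrix (n × n) (n × n) ℂ) (X : Matrix n n ℂ) : Matrix (n × n) (n × n) ℂ :=
  V * tensorOne X * Vᴴ

/-- `Δ̂(X) = V* (1 ⊗ X) V`. -/
def hatDelta (V : Matrix (n × n) (n × n) ℂ) (X : Matrix n n ℂ) : Matrix (n × n) (n × n) ℂ :=
  Vᴴ * oneTensor X * V

/-- `(ω ⊗ ω')(W)` for an operator `W` on `H ⊗ H`. -/
def applyBoth (ω ω' : Matrix n n ℂ →ₗ[ℂ] ℂ) (W : Matrix (n × n) (n × n) ℂ) : ℂ :=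
  ω (Matrix.of fun i j => ω' (Matrix.of fun k l => W (i, k) (j, l)))

end

/- ### Auxiliary lemmas -/

lemma leg23_mul (A B : Matrix (n × n) (n × n) ℂ) : leg23 (A * B) = leg23 A * leg23 B := by
  ext p q
  simp [leg23, Matrix.mul_apply, Fintype.sum_prod_type, ite_mul, mul_ite, Finset.mul_sum]

omit [Fintype n] in
lemma leg23_conjTranspose (A : Matrix (n × n) (n × n) ℂ) : leg23 Aᴴ = (leg23 A)ᴴ := by
  ext p q
  simp only [leg23, Matrix.of_apply, conjTranspose_apply]
  rw [show (if p.1 = q.1 then (1:ℂ) else 0) = (if q.1 = p.1 then (1:ℂ) else 0) from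
    if_congr (Iff.intro Eq.symm Eq.symm) rfl rfl]
  simp [star_mul', apply_ite (starRingEnd ℂ)]

lemma key_identity (V : Matrix (n × n) (n × n) ℂ) (hV : IsMPI V) :
    leg13 V * leg23 V = (leg12 V)ᴴ * leg23 V * leg12 V := by
  obtain ⟨hpi, hpent, hhex2, -, -⟩ := hV
  have h23 : leg23 V * (leg23 V)ᴴ * leg23 V = leg23 V := by
    rw [← leg23_conjTranspose, ← leg23_mul, ← leg23_mul, hpi]
  calc leg13 V * leg23 V
      = leg13 V * (leg23 V * (leg23 V)ᴴ * leg23 V) := by rw [h23]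
    _ = (leg13 V * leg23 V * (leg23 V)ᴴ) * leg23 V := by simp only [mul_assoc]
    _ = ((leg12 V)ᴴ * leg12 V * leg13 V) * leg23 V := by rw [hhex2]
    _ = (leg12 V)ᴴ * (leg12 V * leg13 V * leg23 V) := by simp only [mul_assoc]
    _ = (leg12 V)ᴴ * (leg23 V * leg12 V) := by rw [hpent]
    _ = (leg12 V)ᴴ * leg23 V * leg12 V := by simp only [mul_assoc]

lemma entry_identity (V : Matrix (n × n) (n × n) ℂ) (hV : IsMPI V) (a b c d i j : n) :
    (Vᴴ * oneTensor (Matrix.of fun a b => V (a, i) (b, j)) * V) (a, c) (b, d) =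
      ∑ k, V (a, i) (b, k) * V (c, k) (d, j) := by
  have h := congrFun (congrFun (congrArg (fun M p q => M p q) (key_identity V hV)) (a, c, i))
    (b, d, j)
  simp only [Matrix.mul_apply, leg12, leg13, leg23, oneTensor, Matrix.of_apply,
    conjTranspose_apply, Fintype.sum_prod_type, mul_ite, ite_mul, mul_one, one_mul,
    mul_zero, zero_mul, apply_ite (star : ℂ → ℂ), star_zero, Finset.sum_ite_irrel,
    Finset.sum_const_zero, Finset.sum_ite_eq, Finset.sum_ite_eq',
    Finset.mem_univ, if_true] at h ⊢
  rw [← h]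

/-- `applyBoth ω ω'` as a linear map in `W`. -/
noncomputable def applyBothL (ω ω' : Matrix n n ℂ →ₗ[ℂ] ℂ) :
    Matrix (n × n) (n × n) ℂ →ₗ[ℂ] ℂ where
  toFun := applyBoth ω ω'
  map_add' W₁ W₂ := by
    unfold applyBoth
    have h1 : ∀ i j : n, (Matrix.of fun k l => (W₁ + W₂) (i, k) (j, l)) =
        (Matrix.of fun k l => W₁ (i, k) (j, l)) + (Matrix.of fun k l => W₂ (i, k) (j, l)) :=
      fun _ _ => rfl
    simp only [h1, map_add]
    rw [show (Matrix.of fun i j =>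
          ω' (Matrix.of fun k l => W₁ (i, k) (j, l)) + ω' (Matrix.of fun k l => W₂ (i, k) (j, l)))
        = (Matrix.of fun i j => ω' (Matrix.of fun k l => W₁ (i, k) (j, l)))
          + (Matrix.of fun i j => ω' (Matrix.of fun k l => W₂ (i, k) (j, l))) from rfl, map_add]
  map_smul' c W := by
    unfold applyBoth
    have h1 : ∀ i j : n, (Matrix.of fun k l => (c • W) (i, k) (j, l)) =
        c • (Matrix.of fun k l => W (i, k) (j, l)) := fun _ _ => rfl
    simp only [h1, LinearMap.map_smul, smul_eq_mul, RingHom.id_apply]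
    rw [show (Matrix.of fun i j => c * ω' (Matrix.of fun k l => W (i, k) (j, l)))
        = c • (Matrix.of fun i j => ω' (Matrix.of fun k l => W (i, k) (j, l))) from rfl,
      LinearMap.map_smul, smul_eq_mul]

/-- `Δ̂` as a linear map in `X`. -/
noncomputable def hatDeltaL (V : Matrix (n × n) (n × n) ℂ) :
    Matrix n n ℂ →ₗ[ℂ] Matrix (n × n) (n × n) ℂ where
  toFun X := Vᴴ * oneTensor X * V
  map_add' X Y := by
    show Vᴴ * oneTensor (X + Y) * V = Vᴴ * oneTensor X * V + Vᴴ * oneTensor Y * V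
    have : oneTensor (X + Y) = oneTensor X + oneTensor Y := by
      ext p q; simp [oneTensor, mul_add]
    rw [this, mul_add, add_mul]
  map_smul' c X := by
    show Vᴴ * oneTensor (c • X) * V = c • (Vᴴ * oneTensor X * V)
    have : oneTensor (c • X) = c • oneTensor X := by
      ext p q; simp [oneTensor]
    rw [this, mul_smul_comm, smul_mul_assoc]

theorem statement6 (V : Matrix (n × n) (n × n) ℂ) (hV : IsMPI V)
    (ω ω' : Matrix n n ℂ →ₗ[ℂ] ℂ) :
    lam ω V * lam ω' V =
      Matrix.of (fun i j =>
        applyBoth ω ω' (Vᴴ * oneTensor (Matrix.of fun a b => V (a, i) (b, j)) * V)) ∧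
    ∃ μ : Matrix n n ℂ →ₗ[ℂ] ℂ, lam ω V * lam ω' V = lam μ V := by
  have hmain : lam ω V * lam ω' V =
      Matrix.of (fun i j =>
        applyBoth ω ω' (Vᴴ * oneTensor (Matrix.of fun a b => V (a, i) (b, j)) * V)) := by
    ext i j
    rw [Matrix.mul_apply]
    simp only [lam, Matrix.of_apply, applyBoth]
    have h1 : ∀ a b : n,
        (Matrix.of fun k l =>
            (Vᴴ * oneTensor (Matrix.of fun a b => V (a, i) (b, j)) * V) (a, k) (b, l)) =
          ∑ m, V (a, i) (b, m) • (Matrix.of fun c d => V (c, m) (d, j)) := by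
      intro a b
      ext c d
      rw [Matrix.of_apply, entry_identity V hV a b c d i j]
      simp [Matrix.sum_apply]
    simp only [h1, map_sum, LinearMap.map_smul, smul_eq_mul]
    have h2 : (Matrix.of fun a b =>
          ∑ m, V (a, i) (b, m) * ω' (Matrix.of fun c d => V (c, m) (d, j))) =
        ∑ m, ω' (Matrix.of fun c d => V (c, m) (d, j)) • (Matrix.of fun a b => V (a, i) (b, m)) := by
      ext a b
      simp only [Matrix.of_apply, Matrix.sum_apply, Matrix.smul_apply, smul_eq_mul]
      exact Finset.sum_congr rfl fun m _ => mul_comm _ _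
    rw [h2, map_sum]
    simp only [LinearMap.map_smul, smul_eq_mul]
    exact Finset.sum_congr rfl fun m _ => mul_comm _ _
  refine ⟨hmain, ⟨(applyBothL ω ω').comp (hatDeltaL V), ?_⟩⟩
  rw [hmain]
  rfl

end MPIpaper
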